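/- For every θ ∈ ℓ̄₁(Λ), the function φ(t) = H_ε(θ^ε + t(θ − θ^ε)) is three times differentiable on (0,1) and satisfies the self-concordance inequality |φ'''(t)| ≤ (2/ε) ‖θ − θ^ε‖_{ℓ1} φ''(t) for all 0 < t < 1. -/

import Mathlib

open MeasureTheory Complex Filter Topology

set_option maxHeartbeats 1000000

noncomputable section

/-- Frequencies: `Λ = ℤ^d \ {0}`. -/
abbrev Lam (d : ℕ) := {v : Fin d → ℤ // v ≠ 0}

/-- Negation on `Λ`. -/
def negL {d : ℕ} (l : Lam d) : Lam d := ⟨-l.1, by simpa using l.2⟩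

/-- Fourier character `φ_λ(x) = exp(2πi⟨λ,x⟩)`. -/
def phiF {d : ℕ} (l : Lam d) (x : Fin d → ℝ) : ℂ :=
  Complex.exp (2 * (Real.pi : ℂ) * Complex.I * (∑ i, (l.1 i : ℂ) * (x i : ℂ)))

/-- The real Banach space `ℓ̄₁(Λ)` of complex summable sequences with
`θ_{-λ} = conj (θ_λ)`, as a real submodule of `ℓ¹(Λ; ℂ)`. -/
def SymmL1 (d : ℕ) : Submodule ℝ (lp (fun _ : Lam d => ℂ) 1) where
  carrier := {θ | ∀ l, θ (negL l) = starRingEnd ℂ (θ l)}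
  add_mem' := by
    intro a b ha hb l
    simp only [lp.coeFn_add, Pi.add_apply, map_add, ha l, hb l]
  zero_mem' := by
    intro l
    simp [lp.coeFn_zero]
  smul_mem' := by
    intro r a ha l
    simp only [lp.coeFn_smul, Pi.smul_apply, ha l, Complex.real_smul, map_mul,
      Complex.conj_ofReal]

instance (d : ℕ) : NormedAddCommGroup (SymmL1 d) := inferInstance

instance (d : ℕ) : NormedSpace ℝ (SymmL1 d) := inferInstance

/-- The `λ`-th coefficient of an element of `ℓ̄₁(Λ)`. -/
def coeffL {d : ℕ} (θ : SymmL1 d) (l : Lam d) : ℂ := (θ : lp (fun _ : Lam d => ℂ) 1) l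

/-- The unit cube `𝒳 = [0,1]^d`. -/
def cube (d : ℕ) : Set (Fin d → ℝ) := Set.Icc 0 1

/-- The uniform probability measure on the unit cube. -/
def muU (d : ℕ) : Measure (Fin d → ℝ) := volume.restrict (cube d)

/-- `u_θ(x) = Σ_λ θ_λ φ_λ(x)` (a real number thanks to the symmetry of `θ`). -/
def uFun {d : ℕ} (θ : SymmL1 d) (x : Fin d → ℝ) : ℝ :=
  (∑' l : Lam d, coeffL θ l * phiF l x).re

/-- `h_ε(θ, y)`. -/
def hEps {d : ℕ} (ε : ℝ) (c : (Fin d → ℝ) → (Fin d → ℝ) → ℝ)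
    (θ : SymmL1 d) (y : Fin d → ℝ) : ℝ :=
  ε * Real.log (∫ x, Real.exp ((uFun θ x - c x y) / ε) ∂muU d) + ε

/-- `H_ε(θ) = ∫ h_ε(θ, y) dν(y)`. -/
def HEps {d : ℕ} (ε : ℝ) (c : (Fin d → ℝ) → (Fin d → ℝ) → ℝ)
    (ν : Measure (Fin d → ℝ)) (θ : SymmL1 d) : ℝ :=
  ∫ y, hEps ε c θ y ∂ν

/-- The probability density `F_{θ,y}`. -/
def Fdens {d : ℕ} (ε : ℝ) (c : (Fin d → ℝ) → (Fin d → ℝ) → ℝ)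
    (θ : SymmL1 d) (y : Fin d → ℝ) (x : Fin d → ℝ) : ℝ :=
  Real.exp ((uFun θ x - c x y) / ε) /
    ∫ x', Real.exp ((uFun θ x' - c x' y) / ε) ∂muU d

/-- `g_λ(θ,y) = ∫ conj(φ_λ) F_{θ,y} dμ`, the `λ`-th partial derivative of `h_ε(·,y)`. -/
def gradC {d : ℕ} (ε : ℝ) (c : (Fin d → ℝ) → (Fin d → ℝ) → ℝ)
    (θ : SymmL1 d) (y : Fin d → ℝ) (l : Lam d) : ℂ :=
  ∫ x, starRingEnd ℂ (phiF l x) * (Fdens ε c θ y x : ℂ) ∂muU d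

/-!
Along the segment `θε + s • v`, `h_ε(·, y)` is `ε` times the cumulant generating function of
`w = u_v / ε` under the unnormalised Gibbs measure `exp ((u_θε - c(·, y)) / ε) dμ`, plus `ε`. Its
second and third derivatives are `ε` times the variance and the third central moment of `w` under
the exponentially tilted measures. Since `|w| ≤ ‖v‖ / ε`, the centred variable is bounded by
`2 ‖v‖ / ε`, so the third central moment is at most `2 ‖v‖ / ε` times the variance. These
derivatives are bounded uniformly in `y`, hence commute with the `ν`-integral, and the pointwise
inequality integrates.
-/

open ProbabilityTheory Set

def SelfConcordantWith (K : ℝ) (f : ℝ → ℝ) : Prop :=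
  ∃ f' f'' f''' : ℝ → ℝ,
    (∀ t, HasDerivAt f (f' t) t ∧ HasDerivAt f' (f'' t) t ∧ HasDerivAt f'' (f''' t) t) ∧
      ∀ t, |f''' t| ≤ K * f'' t

section ParametricIntegral

variable {ι : Type*} {mι : MeasurableSpace ι} {ν : Measure ι} [IsFiniteMeasure ν]
  {F F' : ℝ → ι → ℝ} {C : ℝ}

lemma integrable_of_forall_abs_deriv_le (hF : ∀ s, AEStronglyMeasurable (F s) ν)
    (h_deriv : ∀ᵐ y ∂ν, ∀ s, HasDerivAt (F · y) (F' s y) s)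
    (h_bound : ∀ᵐ y ∂ν, ∀ s, |F' s y| ≤ C) {s t : ℝ} (hs : Integrable (F s) ν) :
    Integrable (F t) ν := by
  have h_lip : ∀ᵐ y ∂ν, ‖F t y - F s y‖ ≤ C * ‖t - s‖ := by
    filter_upwards [h_deriv, h_bound] with y hd hb
    exact convex_univ.norm_image_sub_le_of_norm_hasDerivWithin_le
      (fun u _ => (hd u).hasDerivWithinAt) (fun u _ => hb u) (mem_univ s) (mem_univ t)
  simpa using hs.add (Integrable.of_bound ((hF t).sub (hF s)) _ h_lip)

lemma hasDerivAt_integral_of_forall_abs_deriv_le (hF : ∀ s, AEStronglyMeasurable (F s) ν)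
    {t : ℝ} (hF' : AEStronglyMeasurable (F' t) ν)
    (h_deriv : ∀ᵐ y ∂ν, ∀ s, HasDerivAt (F · y) (F' s y) s)
    (h_bound : ∀ᵐ y ∂ν, ∀ s, |F' s y| ≤ C) (hint : Integrable (F t) ν) :
    HasDerivAt (fun s => ∫ y, F s y ∂ν) (∫ y, F' t y ∂ν) t :=
  (hasDerivAt_integral_of_dominated_loc_of_deriv_le univ_mem (.of_forall hF) hint hF'
    (by simpa using h_bound) (integrable_const C) (by simpa using h_deriv)).2

/-- No integrability of `F₀` is assumed: without it `∫ F₀ s` is the junk value `0` for all `s`. -/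
theorem selfConcordantWith_integral {F₀ F₁ F₂ F₃ : ℝ → ι → ℝ} {C₁ C₂ K : ℝ}
    (hF₀ : ∀ s, AEStronglyMeasurable (F₀ s) ν) (hF₁ : ∀ s, AEStronglyMeasurable (F₁ s) ν)
    (hF₂ : ∀ s, AEStronglyMeasurable (F₂ s) ν) (hF₃ : ∀ s, AEStronglyMeasurable (F₃ s) ν)
    (hd₀ : ∀ᵐ y ∂ν, ∀ s, HasDerivAt (F₀ · y) (F₁ s y) s)
    (hd₁ : ∀ᵐ y ∂ν, ∀ s, HasDerivAt (F₁ · y) (F₂ s y) s)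
    (hd₂ : ∀ᵐ y ∂ν, ∀ s, HasDerivAt (F₂ · y) (F₃ s y) s)
    (hb₁ : ∀ᵐ y ∂ν, ∀ s, |F₁ s y| ≤ C₁) (hb₂ : ∀ᵐ y ∂ν, ∀ s, |F₂ s y| ≤ C₂)
    (hK : ∀ᵐ y ∂ν, ∀ s, |F₃ s y| ≤ K * F₂ s y) :
    SelfConcordantWith K (fun s => ∫ y, F₀ s y ∂ν) := by
  have hb₃ : ∀ᵐ y ∂ν, ∀ s, |F₃ s y| ≤ |K| * C₂ := by
    filter_upwards [hK, hb₂] with y hKy hby s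
    calc |F₃ s y| ≤ K * F₂ s y := hKy s
      _ ≤ |K| * |F₂ s y| := by rw [← abs_mul]; exact le_abs_self _
      _ ≤ |K| * C₂ := by gcongr; exact hby s
  have hint₁ (t : ℝ) : Integrable (F₁ t) ν :=
    Integrable.of_bound (hF₁ t) C₁ (hb₁.mono fun _ h => h t)
  have hint₂ (t : ℝ) : Integrable (F₂ t) ν :=
    Integrable.of_bound (hF₂ t) C₂ (hb₂.mono fun _ h => h t)
  by_cases h₀ : Integrable (F₀ 0) ν
  · refine ⟨fun t => ∫ y, F₁ t y ∂ν, fun t => ∫ y, F₂ t y ∂ν, fun t => ∫ y, F₃ t y ∂ν,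
      fun t => ⟨?_, ?_, ?_⟩, fun t => ?_⟩
    · exact hasDerivAt_integral_of_forall_abs_deriv_le hF₀ (hF₁ t) hd₀ hb₁
        (integrable_of_forall_abs_deriv_le hF₀ hd₀ hb₁ h₀)
    · exact hasDerivAt_integral_of_forall_abs_deriv_le hF₁ (hF₂ t) hd₁ hb₂ (hint₁ t)
    · exact hasDerivAt_integral_of_forall_abs_deriv_le hF₂ (hF₃ t) hd₂ hb₃ (hint₂ t)
    · rw [← integral_const_mul, ← Real.norm_eq_abs]
      exact norm_integral_le_of_norm_le ((hint₂ t).const_mul K) (hK.mono fun _ h => h t)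
  · have h_undef : ∀ s, ∫ y, F₀ s y ∂ν = 0 := fun s =>
      integral_undef fun hs => h₀ (integrable_of_forall_abs_deriv_le hF₀ hd₀ hb₁ hs)
    simp_rw [h_undef]
    exact ⟨0, 0, 0, fun t => ⟨hasDerivAt_const t 0, hasDerivAt_const t 0, hasDerivAt_const t 0⟩,
      by simp⟩

end ParametricIntegral

namespace ProbabilityTheory

variable {Ω : Type*} {mΩ : MeasurableSpace Ω} {ρ : Measure Ω} {X : Ω → ℝ} {β : ℝ}

def expMoment (X : Ω → ℝ) (ρ : Measure Ω) (k : ℕ) (s : ℝ) : ℝ :=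
  ∫ ω, X ω ^ k * Real.exp (s * X ω) ∂ρ

/-- The `k`-th moment of `X` under the exponentially tilted measure `exp (s X) ρ / mgf X ρ s`. -/
def tiltedMoment (X : Ω → ℝ) (ρ : Measure Ω) (k : ℕ) (s : ℝ) : ℝ :=
  expMoment X ρ k s / mgf X ρ s

def tiltedVariance (X : Ω → ℝ) (ρ : Measure Ω) (s : ℝ) : ℝ :=
  tiltedMoment X ρ 2 s - tiltedMoment X ρ 1 s ^ 2

def tiltedThirdCumulant (X : Ω → ℝ) (ρ : Measure Ω) (s : ℝ) : ℝ :=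
  tiltedMoment X ρ 3 s - 3 * tiltedMoment X ρ 1 s * tiltedMoment X ρ 2 s
    + 2 * tiltedMoment X ρ 1 s ^ 3

lemma expMoment_zero : expMoment X ρ 0 = mgf X ρ := by
  ext s; simp [expMoment, mgf]

lemma sub_pow_mul_eq_sum (x m e : ℝ) (n : ℕ) :
    (x - m) ^ n * e = ∑ j ∈ Finset.range (n + 1), (-m) ^ (n - j) * n.choose j * (x ^ j * e) := by
  rw [sub_eq_add_neg, add_pow, Finset.sum_mul]
  exact Finset.sum_congr rfl fun j _ => by ring

section Bounded

variable [IsFiniteMeasure ρ] (hX : AEStronglyMeasurable X ρ) (hXβ : ∀ᵐ ω ∂ρ, |X ω| ≤ β)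
include hX hXβ

lemma mem_interior_integrableExpSet_of_bounded (s : ℝ) : s ∈ interior (integrableExpSet X ρ) := by
  suffices integrableExpSet X ρ = univ by simp [this]
  refine eq_univ_of_forall fun t => Integrable.of_bound (by fun_prop) (Real.exp (|t| * β)) ?_
  filter_upwards [hXβ] with ω hω
  rw [Real.norm_eq_abs, Real.abs_exp, Real.exp_le_exp]
  calc t * X ω ≤ |t| * |X ω| := by rw [← abs_mul]; exact le_abs_self _
    _ ≤ |t| * β := by gcongr

lemma integrable_pow_mul_exp_of_bounded (k : ℕ) (s : ℝ) :
    Integrable (fun ω => X ω ^ k * Real.exp (s * X ω)) ρ :=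
  integrable_pow_mul_exp_of_mem_interior_integrableExpSet
    (mem_interior_integrableExpSet_of_bounded hX hXβ s) k

lemma hasDerivAt_expMoment (k : ℕ) (s : ℝ) :
    HasDerivAt (expMoment X ρ k) (expMoment X ρ (k + 1) s) s :=
  hasDerivAt_integral_pow_mul_exp_real (mem_interior_integrableExpSet_of_bounded hX hXβ s) k

lemma abs_expMoment_le (k : ℕ) (s : ℝ) : |expMoment X ρ k s| ≤ β ^ k * mgf X ρ s := by
  rw [← Real.norm_eq_abs, mgf, ← integral_const_mul]
  refine norm_integral_le_of_norm_le
    (by simpa using (integrable_pow_mul_exp_of_bounded hX hXβ 0 s).const_mul (β ^ k)) ?_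
  filter_upwards [hXβ] with ω hω
  rw [norm_mul, Real.norm_eq_abs, Real.norm_eq_abs, Real.abs_exp, abs_pow]
  gcongr

variable (hρ : ρ ≠ 0)
include hρ

lemma mgf_pos_of_bounded (s : ℝ) : 0 < mgf X ρ s :=
  mgf_pos' hρ (by simpa using integrable_pow_mul_exp_of_bounded hX hXβ 0 s)

lemma abs_tiltedMoment_le (k : ℕ) (s : ℝ) : |tiltedMoment X ρ k s| ≤ β ^ k := by
  have h := mgf_pos_of_bounded hX hXβ hρ s
  rw [tiltedMoment, abs_div, abs_of_pos h, div_le_iff₀ h]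
  exact abs_expMoment_le hX hXβ k s

lemma hasDerivAt_tiltedMoment (k : ℕ) (s : ℝ) :
    HasDerivAt (tiltedMoment X ρ k)
      (tiltedMoment X ρ (k + 1) s - tiltedMoment X ρ k s * tiltedMoment X ρ 1 s) s := by
  have h := mgf_pos_of_bounded hX hXβ hρ s
  have h0 := hasDerivAt_expMoment hX hXβ 0 s
  rw [expMoment_zero] at h0
  refine ((hasDerivAt_expMoment hX hXβ k s).div h0 h.ne').congr_deriv ?_
  simp only [tiltedMoment, zero_add]
  field_simp

lemma hasDerivAt_cgf_of_bounded (s : ℝ) : HasDerivAt (cgf X ρ) (tiltedMoment X ρ 1 s) s := by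
  have h0 := hasDerivAt_expMoment hX hXβ 0 s
  rw [expMoment_zero] at h0
  exact h0.log (mgf_pos_of_bounded hX hXβ hρ s).ne'

lemma hasDerivAt_tiltedMoment_one (s : ℝ) :
    HasDerivAt (tiltedMoment X ρ 1) (tiltedVariance X ρ s) s :=
  (hasDerivAt_tiltedMoment hX hXβ hρ 1 s).congr_deriv (by rw [tiltedVariance]; ring)

lemma hasDerivAt_tiltedVariance (s : ℝ) :
    HasDerivAt (tiltedVariance X ρ) (tiltedThirdCumulant X ρ s) s :=
  ((hasDerivAt_tiltedMoment hX hXβ hρ 2 s).sub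
    ((hasDerivAt_tiltedMoment_one hX hXβ hρ s).pow 2)).congr_deriv
    (by rw [tiltedThirdCumulant, tiltedVariance]; ring)

omit hρ in
lemma integrable_sub_pow_mul_exp (m : ℝ) (n : ℕ) (s : ℝ) :
    Integrable (fun ω => (X ω - m) ^ n * Real.exp (s * X ω)) ρ := by
  simp_rw [sub_pow_mul_eq_sum _ m _ n]
  exact integrable_finsetSum _ fun j _ =>
    (integrable_pow_mul_exp_of_bounded hX hXβ j s).const_mul _

omit hρ in
lemma integral_sub_pow_mul_exp (m : ℝ) (n : ℕ) (s : ℝ) :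
    ∫ ω, (X ω - m) ^ n * Real.exp (s * X ω) ∂ρ
      = ∑ j ∈ Finset.range (n + 1), (-m) ^ (n - j) * n.choose j * expMoment X ρ j s := by
  simp_rw [sub_pow_mul_eq_sum _ m _ n]
  rw [integral_finsetSum _ fun j _ => (integrable_pow_mul_exp_of_bounded hX hXβ j s).const_mul _]
  simp only [integral_const_mul, expMoment]

lemma tiltedVariance_eq_integral (s : ℝ) :
    tiltedVariance X ρ s = (∫ ω, (X ω - tiltedMoment X ρ 1 s) ^ 2 * Real.exp (s * X ω) ∂ρ)
      / mgf X ρ s := by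
  have h := mgf_pos_of_bounded hX hXβ hρ s
  rw [integral_sub_pow_mul_exp hX hXβ, tiltedVariance]
  simp only [Finset.sum_range_succ, Finset.sum_range_zero, tiltedMoment, expMoment_zero]
  norm_num
  field_simp
  ring

lemma tiltedThirdCumulant_eq_integral (s : ℝ) :
    tiltedThirdCumulant X ρ s = (∫ ω, (X ω - tiltedMoment X ρ 1 s) ^ 3 * Real.exp (s * X ω) ∂ρ)
      / mgf X ρ s := by
  have h := mgf_pos_of_bounded hX hXβ hρ s
  rw [integral_sub_pow_mul_exp hX hXβ, tiltedThirdCumulant]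
  simp only [Finset.sum_range_succ, Finset.sum_range_zero, tiltedMoment, expMoment_zero]
  norm_num
  field_simp
  ring

lemma tiltedVariance_nonneg (s : ℝ) : 0 ≤ tiltedVariance X ρ s := by
  rw [tiltedVariance_eq_integral hX hXβ hρ]
  exact div_nonneg (integral_nonneg fun ω => by positivity) (mgf_pos_of_bounded hX hXβ hρ s).le

lemma tiltedVariance_le (s : ℝ) : tiltedVariance X ρ s ≤ β ^ 2 := by
  have h2 := (abs_le.1 (abs_tiltedMoment_le hX hXβ hρ 2 s)).2
  have h1 := sq_nonneg (tiltedMoment X ρ 1 s)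
  rw [tiltedVariance]
  linarith

lemma abs_tiltedThirdCumulant_le (s : ℝ) :
    |tiltedThirdCumulant X ρ s| ≤ 2 * β * tiltedVariance X ρ s := by
  set m := tiltedMoment X ρ 1 s
  have h := mgf_pos_of_bounded hX hXβ hρ s
  have hm : |m| ≤ β := by simpa using abs_tiltedMoment_le hX hXβ hρ 1 s
  rw [tiltedThirdCumulant_eq_integral hX hXβ hρ, tiltedVariance_eq_integral hX hXβ hρ, abs_div,
    abs_of_pos h, mul_div_assoc', div_le_div_iff_of_pos_right h, ← integral_const_mul,
    ← Real.norm_eq_abs]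
  refine norm_integral_le_of_norm_le
    ((integrable_sub_pow_mul_exp hX hXβ m 2 s).const_mul _) ?_
  filter_upwards [hXβ] with ω hω
  have hdev : |X ω - m| ≤ 2 * β := (abs_sub _ _).trans (by linarith)
  rw [norm_mul, Real.norm_eq_abs, Real.norm_eq_abs, Real.abs_exp, abs_pow]
  calc |X ω - m| ^ 3 * Real.exp (s * X ω)
      = |X ω - m| * (|X ω - m| ^ 2 * Real.exp (s * X ω)) := by ring
    _ ≤ 2 * β * ((X ω - m) ^ 2 * Real.exp (s * X ω)) := by
      rw [sq_abs]; gcongr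

end Bounded

theorem selfConcordantWith_integral_cgf {ι : Type*} {mι : MeasurableSpace ι} {ν : Measure ι}
    [IsFiniteMeasure ν] {ρ : ι → Measure Ω}
    {X : Ω → ℝ} {β ε : ℝ} (hε : 0 ≤ ε) (b : ℝ) (hX : Measurable X) (hXβ : ∀ ω, |X ω| ≤ β)
    (hρ : ∀ᵐ y ∂ν, IsFiniteMeasure (ρ y) ∧ ρ y ≠ 0)
    (hmeas : ∀ k s, AEMeasurable (fun y => expMoment X (ρ y) k s) ν) :
    SelfConcordantWith (2 * β) (fun s => ∫ y, (ε * cgf X (ρ y) s + b) ∂ν) := by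
  have hmgf (s : ℝ) : AEMeasurable (fun y => mgf X (ρ y) s) ν := by
    simpa [expMoment_zero] using hmeas 0 s
  have hmom (k : ℕ) (s : ℝ) : AEMeasurable (fun y => tiltedMoment X (ρ y) k s) ν :=
    (hmeas k s).div (hmgf s)
  have hbounded : ∀ᵐ y ∂ν, IsFiniteMeasure (ρ y) ∧ ρ y ≠ 0 ∧ AEStronglyMeasurable X (ρ y) ∧
      ∀ᵐ ω ∂(ρ y), |X ω| ≤ β :=
    hρ.mono fun y hy => ⟨hy.1, hy.2, hX.aestronglyMeasurable, ae_of_all _ hXβ⟩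
  refine selfConcordantWith_integral (C₁ := ε * β) (C₂ := ε * β ^ 2)
    (F₁ := fun s y => ε * tiltedMoment X (ρ y) 1 s)
    (F₂ := fun s y => ε * tiltedVariance X (ρ y) s)
    (F₃ := fun s y => ε * tiltedThirdCumulant X (ρ y) s)
    (fun s => AEMeasurable.aestronglyMeasurable ?_) (fun s => AEMeasurable.aestronglyMeasurable ?_)
    (fun s => AEMeasurable.aestronglyMeasurable ?_) (fun s => AEMeasurable.aestronglyMeasurable ?_)
    ?_ ?_ ?_ ?_ ?_ ?_
  · simp only [cgf]; fun_prop
  · fun_prop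
  · simp only [tiltedVariance]; fun_prop
  · simp only [tiltedThirdCumulant]; fun_prop
  all_goals filter_upwards [hbounded] with y ⟨_, hne, hXy, hXβy⟩ s
  · exact ((hasDerivAt_cgf_of_bounded hXy hXβy hne s).const_mul ε).add_const b
  · exact (hasDerivAt_tiltedMoment_one hXy hXβy hne s).const_mul ε
  · exact (hasDerivAt_tiltedVariance hXy hXβy hne s).const_mul ε
  · rw [abs_mul, abs_of_nonneg hε]
    gcongr
    simpa using abs_tiltedMoment_le hXy hXβy hne 1 s
  · rw [abs_mul, abs_of_nonneg hε, abs_of_nonneg (tiltedVariance_nonneg hXy hXβy hne s)]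
    gcongr
    exact tiltedVariance_le hXy hXβy hne s
  · rw [abs_mul, abs_of_nonneg hε, mul_left_comm]
    gcongr
    exact abs_tiltedThirdCumulant_le hXy hXβy hne s

end ProbabilityTheory

section Fourier

variable {d : ℕ}

lemma norm_phiF (l : Lam d) (x : Fin d → ℝ) : ‖phiF l x‖ = 1 := by
  rw [phiF, show 2 * (Real.pi : ℂ) * Complex.I * ∑ i, (l.1 i : ℂ) * (x i : ℂ)
      = ((2 * Real.pi * ∑ i, (l.1 i : ℝ) * x i : ℝ) : ℂ) * Complex.I by push_cast; ring,
    Complex.norm_exp_ofReal_mul_I]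

lemma norm_coeffL_mul_phiF (θ : SymmL1 d) (l : Lam d) (x : Fin d → ℝ) :
    ‖coeffL θ l * phiF l x‖ = ‖coeffL θ l‖ := by
  rw [norm_mul, norm_phiF, mul_one]

lemma summable_norm_coeffL (θ : SymmL1 d) : Summable fun l => ‖coeffL θ l‖ := by
  simpa [coeffL] using (memℓp_gen_iff (by norm_num)).1 (lp.memℓp (θ : lp (fun _ : Lam d => ℂ) 1))

lemma tsum_norm_coeffL (θ : SymmL1 d) : ∑' l, ‖coeffL θ l‖ = ‖θ‖ := by
  simp [coeffL, show ‖θ‖ = ‖(θ : lp (fun _ : Lam d => ℂ) 1)‖ from rfl,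
    lp.norm_eq_tsum_rpow (by norm_num : 0 < (1 : ENNReal).toReal)]

lemma summable_coeffL_mul_phiF (θ : SymmL1 d) (x : Fin d → ℝ) :
    Summable fun l => coeffL θ l * phiF l x :=
  .of_norm <| by simpa only [norm_coeffL_mul_phiF] using summable_norm_coeffL θ

lemma coeffL_add_smul (θ η : SymmL1 d) (s : ℝ) (l : Lam d) :
    coeffL (θ + s • η) l = coeffL θ l + s * coeffL η l := by
  change ((θ : lp (fun _ : Lam d => ℂ) 1) + s • (η : lp (fun _ : Lam d => ℂ) 1)) l = _
  rw [lp.coeFn_add, lp.coeFn_smul, Pi.add_apply, Pi.smul_apply, Complex.real_smul]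
  rfl

lemma uFun_add_smul (θ η : SymmL1 d) (s : ℝ) (x : Fin d → ℝ) :
    uFun (θ + s • η) x = uFun θ x + s * uFun η x := by
  simp_rw [uFun, coeffL_add_smul, add_mul, mul_assoc]
  rw [(summable_coeffL_mul_phiF θ x).tsum_add ((summable_coeffL_mul_phiF η x).mul_left _),
    tsum_mul_left]
  simp

lemma abs_uFun_le (θ : SymmL1 d) (x : Fin d → ℝ) : |uFun θ x| ≤ ‖θ‖ :=
  calc |uFun θ x| ≤ ‖∑' l, coeffL θ l * phiF l x‖ := Complex.abs_re_le_norm _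
    _ ≤ ∑' l, ‖coeffL θ l * phiF l x‖ :=
      norm_tsum_le_tsum_norm (by simpa only [norm_coeffL_mul_phiF] using summable_norm_coeffL θ)
    _ = ∑' l, ‖coeffL θ l‖ := by simp only [norm_coeffL_mul_phiF]
    _ = ‖θ‖ := tsum_norm_coeffL θ

lemma continuous_uFun (θ : SymmL1 d) : Continuous (uFun θ) :=
  Complex.continuous_re.comp <| continuous_tsum (fun l => by unfold phiF; fun_prop)
    (summable_norm_coeffL θ) fun l x => (norm_coeffL_mul_phiF θ l x).le

end Fourier

lemma integral_withDensity_ofReal_exp {α : Type*} [MeasurableSpace α] {μ : Measure α}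
    {a : α → ℝ} (ha : AEMeasurable a μ) (f : α → ℝ) :
    ∫ x, f x ∂μ.withDensity (fun x => ENNReal.ofReal (Real.exp (a x)))
      = ∫ x, Real.exp (a x) * f x ∂μ := by
  rw [integral_withDensity_eq_integral_toReal_smul₀ (by fun_prop)
    (ae_of_all _ fun _ => ENNReal.ofReal_lt_top)]
  simp [ENNReal.toReal_ofReal (Real.exp_pos _).le]

lemma withDensity_ofReal_exp_ne_zero {α : Type*} [MeasurableSpace α] {μ : Measure α} [NeZero μ]
    {a : α → ℝ} (ha : AEMeasurable a μ) :
    μ.withDensity (fun x => ENNReal.ofReal (Real.exp (a x))) ≠ 0 := by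
  rw [Ne, withDensity_eq_zero_iff (by fun_prop)]
  intro h
  have : ∀ᵐ x ∂μ, False := h.mono fun x hx => (Real.exp_pos (a x)).not_ge (by simpa using hx)
  exact NeZero.ne μ (ae_eq_bot.1 (eventually_false_iff_eq_bot.1 this))

instance (d : ℕ) : IsProbabilityMeasure (muU d) :=
  ⟨by simp [muU, cube, Real.volume_Icc_pi]⟩

section Gibbs

variable {d : ℕ} {ε : ℝ} {c : (Fin d → ℝ) → (Fin d → ℝ) → ℝ}

/-- The unnormalised Gibbs measure `exp ((u_θ - c(·, y)) / ε) dμ`; its normalised density is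
`Fdens ε c θ y`. -/
def gibbsMeasure (ε : ℝ) (c : (Fin d → ℝ) → (Fin d → ℝ) → ℝ) (θ : SymmL1 d) (y : Fin d → ℝ) :
    Measure (Fin d → ℝ) :=
  (muU d).withDensity fun x => ENNReal.ofReal (Real.exp ((uFun θ x - c x y) / ε))

lemma aemeasurable_gibbs_exponent {θ : SymmL1 d} {y : Fin d → ℝ}
    (hc : AEMeasurable (fun x => c x y) (muU d)) :
    AEMeasurable (fun x => (uFun θ x - c x y) / ε) (muU d) :=
  ((continuous_uFun θ).measurable.aemeasurable.sub hc).div_const ε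

lemma gibbsMeasure_ne_zero {θ : SymmL1 d} {y : Fin d → ℝ}
    (hc : AEMeasurable (fun x => c x y) (muU d)) : gibbsMeasure ε c θ y ≠ 0 :=
  withDensity_ofReal_exp_ne_zero (aemeasurable_gibbs_exponent hc)

lemma isFiniteMeasure_gibbsMeasure (hε : 0 < ε) (θ : SymmL1 d) {y : Fin d → ℝ}
    (hc : AEMeasurable (fun x => c x y) (muU d))
    (hlsc : LowerSemicontinuousOn (fun x => c x y) (cube d)) :
    IsFiniteMeasure (gibbsMeasure ε c θ y) := by
  obtain ⟨M, hM⟩ := hlsc.bddBelow_of_isCompact isCompact_Icc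
  refine isFiniteMeasure_withDensity_ofReal (Integrable.of_bound
    (aemeasurable_gibbs_exponent hc).exp.aestronglyMeasurable (Real.exp ((‖θ‖ - M) / ε)) ?_).2
  filter_upwards [ae_restrict_mem measurableSet_Icc] with x hx
  rw [Real.norm_eq_abs, Real.abs_exp, Real.exp_le_exp]
  gcongr
  · exact (le_abs_self _).trans (abs_uFun_le θ x)
  · exact hM ⟨x, hx, rfl⟩

lemma hEps_add_smul_eq_cgf (hε : ε ≠ 0) (θ v : SymmL1 d) {y : Fin d → ℝ}
    (hc : AEMeasurable (fun x => c x y) (muU d)) (s : ℝ) :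
    hEps ε c (θ + s • v) y = ε * cgf (fun x => uFun v x / ε) (gibbsMeasure ε c θ y) s + ε := by
  have h_exp (x : Fin d → ℝ) : Real.exp ((uFun (θ + s • v) x - c x y) / ε)
      = Real.exp ((uFun θ x - c x y) / ε) * Real.exp (s * (uFun v x / ε)) := by
    rw [← Real.exp_add, uFun_add_smul]
    congr 1
    field_simp
    ring
  simp_rw [hEps, h_exp, cgf, mgf, gibbsMeasure,
    integral_withDensity_ofReal_exp (aemeasurable_gibbs_exponent hc)]

lemma aemeasurable_expMoment_gibbsMeasure {ν : Measure (Fin d → ℝ)} [SFinite ν]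
    (hc : AEStronglyMeasurable (fun p : (Fin d → ℝ) × (Fin d → ℝ) => c p.1 p.2) ((muU d).prod ν))
    (θ : SymmL1 d) {X : (Fin d → ℝ) → ℝ} (hX : Measurable X) (k : ℕ) (s : ℝ) :
    AEMeasurable (fun y => expMoment X (gibbsMeasure ε c θ y) k s) ν := by
  have hsw : AEMeasurable (fun p : (Fin d → ℝ) × (Fin d → ℝ) => c p.2 p.1) (ν.prod (muU d)) :=
    hc.prod_swap.aemeasurable
  have hu : Measurable fun p : (Fin d → ℝ) × (Fin d → ℝ) => uFun θ p.2 :=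
    (continuous_uFun θ).measurable.comp measurable_snd
  have h_prod : AEStronglyMeasurable (fun p : (Fin d → ℝ) × (Fin d → ℝ) =>
      Real.exp ((uFun θ p.2 - c p.2 p.1) / ε) * (X p.2 ^ k * Real.exp (s * X p.2)))
      (ν.prod (muU d)) :=
    (((hu.aemeasurable.sub hsw).div_const ε).exp.mul (by fun_prop)).aestronglyMeasurable
  refine h_prod.integral_prod_right'.aemeasurable.congr ?_
  filter_upwards [hc.prodMk_right] with y hy
  rw [expMoment, gibbsMeasure, integral_withDensity_ofReal_exp
    (aemeasurable_gibbs_exponent hy.aemeasurable)]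

end Gibbs

theorem statement7_general
    (d : ℕ) (ε : ℝ) (hε : 0 < ε)
    (Y : Set (Fin d → ℝ)) (ν : Measure (Fin d → ℝ)) [IsProbabilityMeasure ν]
    (hνY : ν Yᶜ = 0)
    (c : (Fin d → ℝ) → (Fin d → ℝ) → ℝ)
    (hc_lsc : LowerSemicontinuousOn (fun p : (Fin d → ℝ) × (Fin d → ℝ) => c p.1 p.2)
      (cube d ×ˢ Y))
    (hc_int : Integrable (fun p : (Fin d → ℝ) × (Fin d → ℝ) => c p.1 p.2) ((muU d).prod ν))
    (θε : SymmL1 d) :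
    ∀ θ : SymmL1 d,
      ∃ p1 p2 p3 : ℝ → ℝ,
        (∀ t ∈ Set.Ioo (0 : ℝ) 1,
          HasDerivAt (fun s : ℝ => HEps ε c ν (θε + s • (θ - θε))) (p1 t) t ∧
          HasDerivAt p1 (p2 t) t ∧ HasDerivAt p2 (p3 t) t) ∧
        (∀ t ∈ Set.Ioo (0 : ℝ) 1, |p3 t| ≤ (2 / ε) * ‖θ - θε‖ * p2 t) := by
  intro θ
  have hc := hc_int.aestronglyMeasurable
  have h_slice : ∀ᵐ y ∂ν, AEMeasurable (fun x => c x y) (muU d) ∧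
      IsFiniteMeasure (gibbsMeasure ε c θε y) := by
    filter_upwards [ae_iff.2 hνY, hc.prodMk_right] with y hy hcy
    exact ⟨hcy.aemeasurable, isFiniteMeasure_gibbsMeasure hε θε hcy.aemeasurable
      (hc_lsc.comp (g := fun x => (x, y)) (by fun_prop) fun _ hx => ⟨hx, hy⟩)⟩
  have h_eq : (fun s : ℝ => HEps ε c ν (θε + s • (θ - θε))) = fun s => ∫ y,
      (ε * cgf (fun x => uFun (θ - θε) x / ε) (gibbsMeasure ε c θε y) s + ε) ∂ν :=
    funext fun s => integral_congr_ae <|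
      h_slice.mono fun y hy => hEps_add_smul_eq_cgf hε.ne' θε (θ - θε) hy.1 s
  obtain ⟨p₁, p₂, p₃, h_deriv, h_bound⟩ := selfConcordantWith_integral_cgf
    (X := fun x => uFun (θ - θε) x / ε) (β := ‖θ - θε‖ / ε) hε.le ε
    ((continuous_uFun _).div_const ε).measurable
    (fun x => by rw [abs_div, abs_of_pos hε]; gcongr; exact abs_uFun_le _ x)
    (h_slice.mono fun y hy => ⟨hy.2, gibbsMeasure_ne_zero hy.1⟩)
    (aemeasurable_expMoment_gibbsMeasure hc θε ((continuous_uFun _).div_const ε).measurable)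
  refine ⟨p₁, p₂, p₃, fun t _ => h_eq ▸ h_deriv t, fun t _ => ?_⟩
  convert h_bound t using 2
  ring

/-- self-concordance of `H_ε` along segments through the minimizer.
For every `θ`, the function `φ(t) = H_ε(θ^ε + t(θ − θ^ε))` is three times
differentiable on `(0,1)` and `|φ'''(t)| ≤ (2/ε) ‖θ − θ^ε‖_{ℓ1} φ''(t)` there. -/
theorem statement7
    (d : ℕ) (hd : 0 < d) (ε : ℝ) (hε : 0 < ε)
    (Y : Set (Fin d → ℝ)) (ν : Measure (Fin d → ℝ)) [IsProbabilityMeasure ν]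
    (hνY : ν Yᶜ = 0)
    (c : (Fin d → ℝ) → (Fin d → ℝ) → ℝ)
    (hc_lsc : LowerSemicontinuousOn (fun p : (Fin d → ℝ) × (Fin d → ℝ) => c p.1 p.2)
      (cube d ×ˢ Y))
    (hc_int : Integrable (fun p : (Fin d → ℝ) × (Fin d → ℝ) => c p.1 p.2) ((muU d).prod ν))
    (θε : SymmL1 d) (hmin : ∀ θ : SymmL1 d, HEps ε c ν θε ≤ HEps ε c ν θ) :
    ∀ θ : SymmL1 d,
      ∃ p1 p2 p3 : ℝ → ℝ,
        (∀ t ∈ Set.Ioo (0 : ℝ) 1,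
          HasDerivAt (fun s : ℝ => HEps ε c ν (θε + s • (θ - θε))) (p1 t) t ∧
          HasDerivAt p1 (p2 t) t ∧ HasDerivAt p2 (p3 t) t) ∧
        (∀ t ∈ Set.Ioo (0 : ℝ) 1, |p3 t| ≤ (2 / ε) * ‖θ - θε‖ * p2 t) :=
  statement7_general d ε hε Y ν hνY c hc_lsc hc_int θε

end
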